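/- arXiv:2510.25689 — 6 statements merged into one kernel-verified Lean document; each statement's English description precedes it below -/
import Mathlib

section
/- Let G be a non-complete simple graph on n vertices and let r be an integer with r ≤ n−3. If deg(u) + deg(v) ≥ n + r for every pair of non-adjacent vertices u, v of G, then G is (r+2)-connected. -/
/-!
Two non-adjacent vertices `u, v` have all their neighbours among the other `n - 2` vertices, so
they share at least `deg u + deg v - (n - 2) ≥ r + 2` common neighbours. Deleting fewer than
`r + 2` vertices therefore leaves every non-adjacent surviving pair with a surviving common
neighbour, and the remaining graph has diameter at most two.
-/

open Finset

namespace SimpleGraph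

variable {V : Type*} (G : SimpleGraph V)

theorem induce_connected_of_exists_common_neighbor {s : Set V} (hs : s.Nonempty)
    (h : ∀ a ∈ s, ∀ b ∈ s, a ≠ b → ¬G.Adj a b →
      ∃ w ∈ s, G.Adj a w ∧ G.Adj b w) :
    (G.induce s).Connected := by
  have : Nonempty s := hs.to_subtype
  refine (connected_iff _).2 ⟨fun ⟨a, ha⟩ ⟨b, hb⟩ => ?_, this⟩
  by_cases hab : a = b
  · subst hab; rfl
  by_cases hadj : G.Adj a b
  · exact Adj.reachable (by simpa using hadj)
  obtain ⟨w, hw, haw, hbw⟩ := h a ha b hb hab hadj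
  exact (Adj.reachable (v := ⟨w, hw⟩) (by simpa using haw)).trans
    (Adj.reachable (by simpa using hbw.symm))

variable [Fintype V] [DecidableEq V] [DecidableRel G.Adj]

theorem degree_add_degree_add_two_le_card_inter_add_card {a b : V} (hab : a ≠ b)
    (hnadj : ¬G.Adj a b) :
    G.degree a + G.degree b + 2 ≤
      #(G.neighborFinset a ∩ G.neighborFinset b) + Fintype.card V := by
  have hdisj : Disjoint (G.neighborFinset a ∪ G.neighborFinset b) {a, b} := by
    simp only [disjoint_insert_right, disjoint_singleton_right, mem_union, mem_neighborFinset,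
      not_or]
    exact ⟨⟨G.loopless.irrefl a, mt G.adj_symm hnadj⟩, ⟨hnadj, G.loopless.irrefl b⟩⟩
  have hcard := card_le_univ (G.neighborFinset a ∪ G.neighborFinset b ∪ {a, b})
  rw [card_union_of_disjoint hdisj, card_pair hab] at hcard
  have hunion := card_union_add_card_inter (G.neighborFinset a) (G.neighborFinset b)
  rw [card_neighborFinset_eq_degree, card_neighborFinset_eq_degree] at hunion
  omega

end SimpleGraph

open SimpleGraph

theorem stmt_0_general {V : Type*} [Fintype V] [DecidableEq V] (G : SimpleGraph V)
    [DecidableRel G.Adj] (r : ℤ)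
    (hr : r ≤ (Fintype.card V : ℤ) - 3)
    (hdeg : ∀ u v : V, u ≠ v → ¬ G.Adj u v →
      (Fintype.card V : ℤ) + r ≤ (G.degree u : ℤ) + (G.degree v : ℤ)) :
    r + 3 ≤ (Fintype.card V : ℤ) ∧
      ∀ S : Finset V, (S.card : ℤ) < r + 2 →
        (G.induce ((↑S : Set V)ᶜ)).Connected := by
  refine ⟨by omega, fun S hS => G.induce_connected_of_exists_common_neighbor ?_ ?_⟩
  · obtain ⟨x, -, hx⟩ := exists_mem_notMem_of_card_lt_card (s := S) (t := univ)
      (by rw [card_univ]; omega)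
    exact ⟨x, hx⟩
  · intro a ha b hb hab hnadj
    have hcommon := G.degree_add_degree_add_two_le_card_inter_add_card hab hnadj
    have hdeg_ab := hdeg a b hab hnadj
    obtain ⟨w, hw, hwS⟩ := exists_mem_notMem_of_card_lt_card
      (s := S) (t := G.neighborFinset a ∩ G.neighborFinset b) (by omega)
    rw [mem_inter, mem_neighborFinset, mem_neighborFinset] at hw
    exact ⟨w, hwS, hw⟩

/-- If `G` is a non-complete graph on `n` vertices, `r ≤ n - 3`, and
`deg u + deg v ≥ n + r` for all non-adjacent pairs, then `G` is `(r+2)`-connected,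
i.e. it has at least `r + 3` vertices and removing fewer than `r + 2` vertices
leaves it connected. -/
theorem stmt_0 {V : Type*} [Fintype V] [DecidableEq V] (G : SimpleGraph V)
    [DecidableRel G.Adj] (r : ℤ) (hnc : G ≠ ⊤)
    (hr : r ≤ (Fintype.card V : ℤ) - 3)
    (hdeg : ∀ u v : V, u ≠ v → ¬ G.Adj u v →
      (Fintype.card V : ℤ) + r ≤ (G.degree u : ℤ) + (G.degree v : ℤ)) :
    r + 3 ≤ (Fintype.card V : ℤ) ∧
      ∀ S : Finset V, (S.card : ℤ) < r + 2 →
        (G.induce ((↑S : Set V)ᶜ)).Connected :=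
  stmt_0_general G r hr hdeg
end

section
/- Let M be a matroid on ground set E with rank function r, such that every circuit of M has size at least d + 1 (equivalently, every subset of E of size at most d is independent). Let i be an integer with d ≤ i ≤ |E| and let A be a uniformly random subset of E of size i. Then the expected value of r(A) is at least d + (r(E) − d)·(i − d)/(|E| − d), where the last term is interpreted as 0 if |E| = d. -/
/-!
Let `a k` be the average rank of a `k`-subset of `E`. For a random `k`-set `S` and two distinct
random elements `x, y ∉ S`, the sets `S`, `S + x`, `S + y`, `S + x + y` are uniformly distributed
among the subsets of sizes `k`, `k + 1`, `k + 1`, `k + 2`, so averaging submodularity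
`r S + r (S + x + y) ≤ r (S + x) + r (S + y)` gives `a k + a (k + 2) ≤ 2 a (k + 1)`.
A concave sequence lies above its chords; by the girth hypothesis `a d = d`, and `a |E| = r E`.
-/

noncomputable def matroidRank {α : Type*} (M : Matroid α) (X : Set α) : ℕ :=
  sSup {n : ℕ | ∃ I : Set α, I ⊆ X ∧ M.Indep I ∧ I.ncard = n}

open Finset

section MatroidRank
variable {α : Type*} {M : Matroid α} [M.RankFinite]

lemma matroidRank_eq_eRk (X : Set α) : (matroidRank M X : ℕ∞) = M.eRk X := by
  obtain ⟨k, hk⟩ := ENat.ne_top_iff_exists.mp (M.eRk_ne_top_iff.mpr (M.isRkFinite_set X))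
  suffices {n : ℕ | ∃ I : Set α, I ⊆ X ∧ M.Indep I ∧ I.ncard = n} = Set.Iic k by
    rw [matroidRank, this, csSup_Iic, hk]
  ext n
  simp only [Set.mem_ofPred_eq, Set.mem_Iic, ← ENat.natCast_le_natCast, hk, Matroid.le_eRk_iff]
  constructor
  · rintro ⟨I, hIX, hI, rfl⟩
    exact ⟨I, hIX, hI, hI.finite.cast_ncard_eq.symm⟩
  · rintro ⟨I, hIX, hI, hIn⟩
    exact ⟨I, hIX, hI, by rw [← ENat.natCast_inj, hI.finite.cast_ncard_eq, hIn]⟩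

lemma matroidRank_inter_add_matroidRank_union_le (X Y : Set α) :
    matroidRank M (X ∩ Y) + matroidRank M (X ∪ Y) ≤ matroidRank M X + matroidRank M Y := by
  have := M.eRk_inter_add_eRk_union_le X Y
  simp only [← matroidRank_eq_eRk] at this
  exact_mod_cast this

lemma Matroid.Indep.matroidRank_eq_ncard {I : Set α} (hI : M.Indep I) :
    matroidRank M I = I.ncard := by
  rw [← ENat.natCast_inj, matroidRank_eq_eRk, hI.eRk_eq_encard, hI.finite.cast_ncard_eq]

end MatroidRank

section ConcaveSequence
variable {𝕜 : Type*} [Field 𝕜] [LinearOrder 𝕜] [IsStrictOrderedRing 𝕜]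

theorem chord_le_of_add_le_two_mul {a : ℕ → 𝕜} {d n : ℕ}
    (ha : ∀ j, d ≤ j → j + 2 ≤ n → a j + a (j + 2) ≤ 2 * a (j + 1)) {i : ℕ}
    (hdi : d ≤ i) (hin : i ≤ n) :
    a d + (a n - a d) * (i - d) / (n - d) ≤ a i := by
  set D : ℕ → 𝕜 := fun j ↦ a (j + 1) - a j
  have hD : ∀ j k, d ≤ j → j ≤ k → k + 1 ≤ n → D k ≤ D j := by
    intro j k hj hjk hk
    induction k, hjk using Nat.le_induction with
    | base => rfl
    | succ k hjk ih =>
      have := ha k (hj.trans hjk) hk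
      exact le_trans (by simp only [D]; linarith) (ih (by omega))
  -- Every increment of `a` on `[d, i)` dominates every increment on `[i, n)`.
  have key : (i - d : 𝕜) * (a n - a i) ≤ (n - i) * (a i - a d) := by
    have hsum : 0 ≤ ∑ j ∈ Ico d i, ∑ k ∈ Ico i n, (D j - D k) :=
      sum_nonneg fun j hj ↦ sum_nonneg fun k hk ↦ by
        rw [mem_Ico] at hj hk
        exact sub_nonneg.mpr (hD j k hj.1 (by omega) (by omega))
    simp only [sum_sub_distrib, sum_const, Nat.card_Ico, nsmul_eq_mul] at hsum
    rw [← mul_sum, show ∑ j ∈ Ico d i, D j = a i - a d from sum_Ico_sub a hdi,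
      show ∑ j ∈ Ico i n, D j = a n - a i from sum_Ico_sub a hin,
      Nat.cast_sub hin, Nat.cast_sub hdi] at hsum
    linarith
  rcases hdi.eq_or_lt with rfl | hlt
  · simp
  have hdn : (0 : 𝕜) < n - d := sub_pos.mpr (by exact_mod_cast hlt.trans_le hin)
  rw [← le_sub_iff_add_le', div_le_iff₀ hdn]
  linear_combination key

end ConcaveSequence

namespace Finset
variable {α β : Type*} {E S : Finset α} {k : ℕ}

section DoubleCounting
variable [DecidableEq α] {x : α}

lemma card_sdiff_of_mem_powersetCard (hS : S ∈ E.powersetCard k) : #(E \ S) = #E - k := by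
  rw [mem_powersetCard] at hS
  rw [card_sdiff_of_subset hS.1, hS.2]

lemma insert_mem_powersetCard_succ (hS : S ∈ E.powersetCard k) (hx : x ∈ E \ S) :
    insert x S ∈ E.powersetCard (k + 1) := by
  rw [mem_powersetCard] at hS ⊢
  rw [mem_sdiff] at hx
  exact ⟨insert_subset hx.1 hS.1, by rw [card_insert_of_notMem hx.2, hS.2]⟩

theorem sum_powersetCard_sum_sdiff_insert [AddCommMonoid β] (E : Finset α) (g : Finset α → β)
    (k : ℕ) :
    ∑ S ∈ E.powersetCard k, ∑ x ∈ E \ S, g (insert x S) =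
      (k + 1) • ∑ T ∈ E.powersetCard (k + 1), g T := by
  have hcount : ∑ T ∈ E.powersetCard (k + 1), ∑ _x ∈ T, g T =
      (k + 1) • ∑ T ∈ E.powersetCard (k + 1), g T := by
    rw [smul_sum]
    exact sum_congr rfl fun T hT ↦ by rw [sum_const, (mem_powersetCard.mp hT).2]
  rw [← hcount, sum_sigma', sum_sigma']
  refine sum_bij' (fun p _ ↦ ⟨insert p.2 p.1, p.2⟩) (fun p _ ↦ ⟨p.1.erase p.2, p.2⟩)
    ?_ ?_ ?_ ?_ ?_
  · rintro ⟨S, x⟩ h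
    simp only [mem_sigma] at h ⊢
    exact ⟨insert_mem_powersetCard_succ h.1 h.2, mem_insert_self x S⟩
  · rintro ⟨T, x⟩ h
    simp only [mem_sigma, mem_powersetCard] at h ⊢
    refine ⟨⟨(erase_subset x T).trans h.1.1, by rw [card_erase_of_mem h.2, h.1.2]; rfl⟩, ?_⟩
    simp [h.1.1 h.2]
  · rintro ⟨S, x⟩ h
    simp only [mem_sigma, mem_sdiff] at h
    simp [erase_insert h.2.2]
  · rintro ⟨T, x⟩ h
    simp only [mem_sigma] at h
    simp [insert_erase h.2]
  · rintro ⟨S, x⟩ _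
    rfl

theorem sum_powersetCard_concave [AddCommMonoid β] [PartialOrder β] [IsOrderedAddMonoid β]
    {f : Finset α → β} (hf : ∀ A ⊆ E, ∀ B ⊆ E, f (A ∩ B) + f (A ∪ B) ≤ f A + f B) (k : ℕ) :
    ((#E - k) * (#E - k - 1)) • ∑ A ∈ E.powersetCard k, f A +
        ((k + 1) * (k + 2)) • ∑ A ∈ E.powersetCard (k + 2), f A ≤
      (2 * ((k + 1) * (#E - k - 1))) • ∑ A ∈ E.powersetCard (k + 1), f A := by
  have hcard : ∀ S ∈ E.powersetCard k, ∀ x ∈ E \ S, #(E \ insert x S) = #E - k - 1 :=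
    fun S hS x hx ↦ card_sdiff_of_mem_powersetCard (insert_mem_powersetCard_succ hS hx)
  have hbottom : ∑ S ∈ E.powersetCard k, ∑ x ∈ E \ S, ∑ _y ∈ E \ insert x S, f S =
      ((#E - k) * (#E - k - 1)) • ∑ A ∈ E.powersetCard k, f A := by
    rw [smul_sum]
    refine sum_congr rfl fun S hS ↦ ?_
    rw [sum_congr rfl fun x hx ↦ by rw [sum_const, hcard S hS x hx], sum_const,
      card_sdiff_of_mem_powersetCard hS, mul_smul]
  have htop : ∑ S ∈ E.powersetCard k, ∑ x ∈ E \ S, ∑ y ∈ E \ insert x S,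
      f (insert y (insert x S)) = ((k + 1) * (k + 2)) • ∑ A ∈ E.powersetCard (k + 2), f A := by
    rw [sum_powersetCard_sum_sdiff_insert E (fun T ↦ ∑ y ∈ E \ T, f (insert y T)),
      sum_powersetCard_sum_sdiff_insert, mul_smul]
  have hmiddle : ∑ S ∈ E.powersetCard k, ∑ x ∈ E \ S, ∑ _y ∈ E \ insert x S, f (insert x S) =
      ((k + 1) * (#E - k - 1)) • ∑ A ∈ E.powersetCard (k + 1), f A := by
    rw [mul_comm, mul_smul, ← sum_powersetCard_sum_sdiff_insert, smul_sum]
    refine sum_congr rfl fun S hS ↦ ?_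
    rw [smul_sum]
    exact sum_congr rfl fun x hx ↦ by rw [sum_const, hcard S hS x hx]
  -- The two middle terms `S + x` and `S + y` contribute equally, by swapping `x` and `y`.
  have hswap : ∀ S, ∑ x ∈ E \ S, ∑ y ∈ E \ insert x S, f (insert y S) =
      ∑ x ∈ E \ S, ∑ _y ∈ E \ insert x S, f (insert x S) := fun S ↦
    sum_comm' fun x y ↦ by simp only [mem_sdiff, mem_insert]; tauto
  calc _ = ∑ S ∈ E.powersetCard k, ∑ x ∈ E \ S, ∑ y ∈ E \ insert x S,
        (f S + f (insert y (insert x S))) := by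
        simp only [sum_add_distrib, hbottom, htop]
    _ ≤ ∑ S ∈ E.powersetCard k, ∑ x ∈ E \ S, ∑ y ∈ E \ insert x S,
        (f (insert x S) + f (insert y S)) := by
        refine sum_le_sum fun S hS ↦ sum_le_sum fun x hx ↦ sum_le_sum fun y hy ↦ ?_
        rw [mem_powersetCard] at hS
        simp only [mem_sdiff, mem_insert, not_or] at hx hy
        have hinter : insert x S ∩ insert y S = S := by
          ext z; simp only [mem_inter, mem_insert]; grind
        have hunion : insert x S ∪ insert y S = insert y (insert x S) := by
          ext z; simp only [mem_union, mem_insert]; tauto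
        simpa only [hinter, hunion] using
          hf _ (insert_subset hx.1 hS.1) _ (insert_subset hy.1 hS.1)
    _ = _ := by
        simp only [sum_add_distrib, hswap, hmiddle, two_smul, mul_smul 2]

end DoubleCounting

variable {𝕜 : Type*} [Field 𝕜] [LinearOrder 𝕜] [IsStrictOrderedRing 𝕜] {f : Finset α → 𝕜}

def powersetCardAverage (E : Finset α) (f : Finset α → 𝕜) (k : ℕ) : 𝕜 :=
  (∑ A ∈ E.powersetCard k, f A) / #(E.powersetCard k)

lemma sum_powersetCard_eq_choose_mul_average (hk : k ≤ #E) :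
    ∑ A ∈ E.powersetCard k, f A = (#E).choose k * E.powersetCardAverage f k := by
  rw [powersetCardAverage, card_powersetCard, mul_div_cancel₀]
  exact_mod_cast (Nat.choose_pos hk).ne'

lemma powersetCardAverage_eq_of_forall {c : 𝕜} (hk : k ≤ #E)
    (h : ∀ A ∈ E.powersetCard k, f A = c) : E.powersetCardAverage f k = c := by
  rw [powersetCardAverage, sum_congr rfl h, sum_const, nsmul_eq_mul, mul_div_cancel_left₀]
  rw [card_powersetCard]
  exact_mod_cast (Nat.choose_pos hk).ne'

theorem powersetCardAverage_concave [DecidableEq α]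
    (hf : ∀ A ⊆ E, ∀ B ⊆ E, f (A ∩ B) + f (A ∪ B) ≤ f A + f B) (hk : k + 2 ≤ #E) :
    E.powersetCardAverage f k + E.powersetCardAverage f (k + 2) ≤
      2 * E.powersetCardAverage f (k + 1) := by
  have hsum := sum_powersetCard_concave hf k
  simp only [nsmul_eq_mul, sum_powersetCard_eq_choose_mul_average (f := f) (by omega : k ≤ #E),
    sum_powersetCard_eq_choose_mul_average (f := f) (by omega : k + 1 ≤ #E),
    sum_powersetCard_eq_choose_mul_average (f := f) hk] at hsum
  set n := #E
  have hsucc : (n.choose (k + 1) * (k + 1) : ℕ) = n.choose k * (n - k) :=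
    Nat.choose_succ_right_eq n k
  have hsucc' : (n.choose (k + 2) * (k + 2) : ℕ) = n.choose (k + 1) * (n - k - 1) :=
    Nat.choose_succ_right_eq n (k + 1)
  -- the number of triples `(S, x, y)` with `#S = k` and `x ≠ y` outside `S`
  have hN : (0 : 𝕜) < n.choose k * ((n - k : ℕ) * (n - k - 1 : ℕ)) := by
    exact_mod_cast Nat.mul_pos (Nat.choose_pos (by omega)) (Nat.mul_pos (by omega) (by omega))
  refine le_of_mul_le_mul_left ?_ hN
  have hsucc𝕜 := congrArg (Nat.cast : ℕ → 𝕜) hsucc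
  have hsucc'𝕜 := congrArg (Nat.cast : ℕ → 𝕜) hsucc'
  push_cast at hsum hsucc𝕜 hsucc'𝕜
  linear_combination hsum - E.powersetCardAverage f (k + 2) * (k + 1) * hsucc'𝕜 +
    (2 * E.powersetCardAverage f (k + 1) - E.powersetCardAverage f (k + 2)) *
      ((n - k - 1 : ℕ) : 𝕜) * hsucc𝕜

end Finset

theorem stmt_5_general {α : Type*} (M : Matroid α) (E : Finset α)
    (hE : M.E = ↑E) (d i : ℕ)
    (hgirth : ∀ I : Set α, I ⊆ M.E → I.ncard ≤ d → M.Indep I)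
    (hdi : d ≤ i) (hiE : i ≤ E.card) :
    (d : ℚ) + ((matroidRank M M.E : ℚ) - d) * ((i : ℚ) - d) / ((E.card : ℚ) - d) ≤
      (∑ A ∈ E.powersetCard i, (matroidRank M ↑A : ℚ)) /
        ((E.powersetCard i).card : ℚ) := by
  classical
  have : M.Finite := ⟨hE ▸ E.finite_toSet⟩
  set r : Finset α → ℚ := fun A ↦ matroidRank M ↑A
  have hsubmod : ∀ A ⊆ E, ∀ B ⊆ E, r (A ∩ B) + r (A ∪ B) ≤ r A + r B := fun A _ B _ ↦ by
    simp only [r, coe_inter, coe_union]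
    exact_mod_cast matroidRank_inter_add_matroidRank_union_le (M := M) ↑A ↑B
  have hbottom : E.powersetCardAverage r d = d :=
    powersetCardAverage_eq_of_forall (hdi.trans hiE) fun A hA ↦ by
      rw [mem_powersetCard] at hA
      have hindep := hgirth ↑A (hE ▸ coe_subset.mpr hA.1) (by rw [Set.ncard_coe_finset, hA.2])
      simp only [r, hindep.matroidRank_eq_ncard, Set.ncard_coe_finset, hA.2]
  have htop : E.powersetCardAverage r #E = matroidRank M M.E :=
    powersetCardAverage_eq_of_forall le_rfl fun A hA ↦ by
      rw [powersetCard_self, mem_singleton] at hA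
      rw [hA, hE]
  have hchord := chord_le_of_add_le_two_mul
    (fun j _ hj ↦ powersetCardAverage_concave (k := j) hsubmod hj) hdi hiE
  rwa [hbottom, htop] at hchord

/-- If every subset of the ground set of size at most `d` is independent
(girth ≥ d+1), `d ≤ i ≤ |E|`, and `A` is a uniformly random subset of `E` of size `i`,
then `𝔼(r A) ≥ d + (r E - d) (i - d)/(|E| - d)` (the last term read as `0` when
`|E| = d`, matching the division-by-zero convention). -/
theorem stmt_5 {α : Type*} [DecidableEq α] (M : Matroid α) (E : Finset α)
    (hE : M.E = ↑E) (d i : ℕ)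
    (hgirth : ∀ I : Set α, I ⊆ M.E → I.ncard ≤ d → M.Indep I)
    (hdi : d ≤ i) (hiE : i ≤ E.card) :
    (d : ℚ) + ((matroidRank M M.E : ℚ) - d) * ((i : ℚ) - d) / ((E.card : ℚ) - d) ≤
      (∑ A ∈ E.powersetCard i, (matroidRank M ↑A : ℚ)) /
        ((E.powersetCard i).card : ℚ) :=
  stmt_5_general M E hE d i hgirth hdi hiE
end

section
/- Let G be a simple graph on n ≥ 2d + 1 vertices such that deg(u) + deg(v) ≥ n + d − 2 for all non-adjacent pairs u, v, and suppose δ(G) = d. Let v be a vertex of degree d and let T = V − N(v) − {v}. Then every vertex of T has degree exactly n − 2 in G, and G[T] is a complete graph on n − d − 1 ≥ d vertices. -/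
/-! A vertex `t` of `T` is not adjacent to `v`, so `deg t ≥ (n + d - 2) - deg v = n - 2`; being
non-adjacent to `v` also caps `deg t` at `n - 2`. Two non-adjacent vertices `s, t` of `T` would
force `deg s ≤ n - 3`, so `G[T]` is complete. -/

namespace SimpleGraph

variable {V : Type*} [Fintype V] [DecidableEq V] (G : SimpleGraph V) [DecidableRel G.Adj]

theorem degree_add_card_add_one_le {u : V} {s : Finset V} (hu : u ∉ s)
    (hs : ∀ w ∈ s, ¬ G.Adj u w) :
    G.degree u + s.card + 1 ≤ Fintype.card V := by
  have hdisj : Disjoint (G.neighborFinset u) (insert u s) := by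
    refine Finset.disjoint_left.mpr fun w hw hws => ?_
    rw [mem_neighborFinset] at hw
    rcases Finset.mem_insert.mp hws with rfl | hws
    · exact G.irrefl hw
    · exact hs w hws hw
  calc G.degree u + s.card + 1 = (G.neighborFinset u ∪ insert u s).card := by
        rw [Finset.card_union_of_disjoint hdisj, Finset.card_insert_of_notMem hu,
          card_neighborFinset_eq_degree, add_assoc]
    _ ≤ Fintype.card V := Finset.card_le_univ _

theorem mem_erase_sdiff_neighborFinset {v t : V} :
    t ∈ (Finset.univ \ G.neighborFinset v).erase v ↔ t ≠ v ∧ ¬ G.Adj v t := by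
  simp

theorem card_erase_sdiff_neighborFinset (v : V) :
    ((Finset.univ \ G.neighborFinset v).erase v).card = Fintype.card V - G.degree v - 1 := by
  rw [Finset.card_erase_of_mem (by simp), Finset.card_sdiff_of_subset (Finset.subset_univ _),
    Finset.card_univ, card_neighborFinset_eq_degree]

end SimpleGraph

open SimpleGraph in
theorem stmt_9_general {V : Type*} [Fintype V] [DecidableEq V]
    (G : SimpleGraph V) [DecidableRel G.Adj] (d : ℕ)
    (hn : 2 * d + 1 ≤ Fintype.card V)
    (hdeg : ∀ u v : V, u ≠ v → ¬ G.Adj u v →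
      Fintype.card V + d - 2 ≤ G.degree u + G.degree v)
    (v : V) (hv : G.degree v = d)
    (T : Finset V) (hT : T = (Finset.univ \ G.neighborFinset v).erase v) :
    (∀ t ∈ T, G.degree t = Fintype.card V - 2) ∧
      (∀ s ∈ T, ∀ t ∈ T, s ≠ t → G.Adj s t) ∧
      T.card = Fintype.card V - d - 1 ∧ d ≤ T.card := by
  subst hT
  have hcard := G.card_erase_sdiff_neighborFinset v
  have hdegree : ∀ t ∈ (Finset.univ \ G.neighborFinset v).erase v,
      G.degree t = Fintype.card V - 2 := by
    intro t ht
    obtain ⟨htv, hvt⟩ := G.mem_erase_sdiff_neighborFinset.mp ht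
    have hlower := hdeg t v htv fun h => hvt h.symm
    have hupper := G.degree_add_card_add_one_le (u := t) (s := {v}) (by simpa using htv)
      (by simpa [adj_comm] using hvt)
    rw [Finset.card_singleton] at hupper
    omega
  refine ⟨hdegree, fun s hs t ht hst => ?_, by rw [hcard, hv], by omega⟩
  by_contra hst_adj
  obtain ⟨hsv, hvs⟩ := G.mem_erase_sdiff_neighborFinset.mp hs
  obtain ⟨htv, -⟩ := G.mem_erase_sdiff_neighborFinset.mp ht
  have hupper := G.degree_add_card_add_one_le (u := s) (s := {v, t}) (by simp [hsv, hst])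
    (by simpa [adj_comm] using ⟨hvs, hst_adj⟩)
  rw [Finset.card_pair htv.symm] at hupper
  have := hdegree s hs
  omega

/-- If `n ≥ 2d+1`, `deg u + deg v ≥ n + d - 2` for all non-adjacent
pairs, `δ(G) = d`, `v` has degree `d` and `T = V - N(v) - {v}`, then every vertex
of `T` has degree `n - 2`, `G[T]` is complete, and `|T| = n - d - 1 ≥ d`. -/
theorem stmt_9 {V : Type*} [Fintype V] [DecidableEq V] [Nonempty V]
    (G : SimpleGraph V) [DecidableRel G.Adj] (d : ℕ)
    (hn : 2 * d + 1 ≤ Fintype.card V)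
    (hdeg : ∀ u v : V, u ≠ v → ¬ G.Adj u v →
      Fintype.card V + d - 2 ≤ G.degree u + G.degree v)
    (hmin : G.minDegree = d) (v : V) (hv : G.degree v = d)
    (T : Finset V) (hT : T = (Finset.univ \ G.neighborFinset v).erase v) :
    (∀ t ∈ T, G.degree t = Fintype.card V - 2) ∧
      (∀ s ∈ T, ∀ t ∈ T, s ≠ t → G.Adj s t) ∧
      T.card = Fintype.card V - d - 1 ∧ d ≤ T.card :=
  stmt_9_general G d hn hdeg v hv T hT
end

section
/- Let G be a simple graph on n vertices and let X ⊆ V(G) be a nonempty set of vertices each of degree strictly greater than n/2. Then there exists a vertex v ∈ V(G) with |N(v) ∩ X| ≥ (|X| + 1)/2. -/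
/-! Counting the pairs `(v, x)` with `x ∈ X` adjacent to `v` gives
`∑ v, |N(v) ∩ X| = ∑ x ∈ X, deg x > n |X| / 2`, so some `v` has `|N(v) ∩ X| > |X| / 2`;
integrality turns this into `|N(v) ∩ X| ≥ (|X| + 1) / 2`. -/

open Finset

namespace SimpleGraph

variable {V : Type*} [Fintype V] [DecidableEq V] (G : SimpleGraph V) [DecidableRel G.Adj]

theorem sum_card_neighborFinset_inter (X : Finset V) :
    ∑ v, #(G.neighborFinset v ∩ X) = ∑ x ∈ X, G.degree x := by
  convert sum_card_bipartiteAbove_eq_sum_card_bipartiteBelow (s := univ) (t := X) (r := G.Adj)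
    using 3 with v - x
  · ext x
    simp [bipartiteAbove, and_comm]
  · rw [← card_neighborFinset_eq_degree]
    congr 1
    ext v
    simp [bipartiteBelow, G.adj_comm]

theorem exists_sum_degree_le_card_mul_card_neighborFinset_inter [Nonempty V] (X : Finset V) :
    ∃ v, ∑ x ∈ X, G.degree x ≤ Fintype.card V * #(G.neighborFinset v ∩ X) := by
  obtain ⟨v, -, hv⟩ := exists_le_of_sum_le (s := univ) univ_nonempty
    (f := fun _ ↦ ∑ x ∈ X, G.degree x) (g := fun v ↦ Fintype.card V * #(G.neighborFinset v ∩ X))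
    (by rw [← mul_sum, sum_card_neighborFinset_inter, sum_const, card_univ, smul_eq_mul])
  exact ⟨v, hv⟩

end SimpleGraph

/-- If every vertex of a nonempty set `X` has degree `> n/2`, then
some vertex `v` satisfies `|N(v) ∩ X| ≥ (|X| + 1)/2`. -/
theorem stmt_10 {V : Type*} [Fintype V] [DecidableEq V] (G : SimpleGraph V)
    [DecidableRel G.Adj] (X : Finset V) (hX : X.Nonempty)
    (hdeg : ∀ x ∈ X, (Fintype.card V : ℚ) / 2 < (G.degree x : ℚ)) :
    ∃ v : V, ((X.card : ℚ) + 1) / 2 ≤ ((G.neighborFinset v ∩ X).card : ℚ) := by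
  have : Nonempty V := ⟨hX.choose⟩
  obtain ⟨v, hv⟩ := G.exists_sum_degree_le_card_mul_card_neighborFinset_inter X
  refine ⟨v, ?_⟩
  have hsum : (X.card : ℚ) * (Fintype.card V / 2) < ∑ x ∈ X, (G.degree x : ℚ) := by
    simpa using sum_lt_sum_of_nonempty hX hdeg
  have hlt : (X.card : ℚ) < 2 * (G.neighborFinset v ∩ X).card := by
    have hn : (0 : ℚ) < Fintype.card V := by exact_mod_cast Fintype.card_pos
    have hv' : ∑ x ∈ X, (G.degree x : ℚ) ≤ Fintype.card V * (G.neighborFinset v ∩ X).card := by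
      exact_mod_cast hv
    nlinarith
  have hsucc : X.card + 1 ≤ 2 * (G.neighborFinset v ∩ X).card := by exact_mod_cast hlt
  have : ((X.card : ℚ) + 1) ≤ 2 * (G.neighborFinset v ∩ X).card := by exact_mod_cast hsucc
  linarith
end

section
/- For every integer r ≥ 0 and all sufficiently large n (say n ≥ 2r + 4), there exists a simple graph G on n vertices that is not (r+2)-connected but satisfies deg(u) + deg(v) ≥ n + r − 1 for every pair of non-adjacent vertices u, v. Concretely, the graph obtained by gluing two complete graphs, each on at least r + 3 vertices, along a common set of r + 1 vertices has this property. -/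
/-!
Glue the cliques on `A` and `B` along `S = A ∩ B`, where `|S| = r + 1` and `A ∪ B` is everything.
Two distinct non-adjacent vertices lie one in `A \ B`, the other in `B \ A`, so their degrees are
`|A| - 1` and `|B| - 1`, which add up to `n + |S| - 2 = n + r - 1`. Every edge leaving `A \ B`
ends in `A`, so once `S` is deleted no walk leads from `A \ B` to `B \ A`: the `r + 1` vertices of
`S` separate the graph.
-/

open Set

namespace SimpleGraph

variable {V : Type*} {A B : Set V}

def glueCliques (A B : Set V) : SimpleGraph V where
  Adj u v := u ≠ v ∧ (u ∈ A ∧ v ∈ A ∨ u ∈ B ∧ v ∈ B)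
  symm := ⟨fun _ _ ⟨hne, h⟩ => ⟨hne.symm, h.imp And.symm And.symm⟩⟩
  loopless := ⟨fun _ h => h.1 rfl⟩

@[simp]
theorem glueCliques_adj {u v : V} :
    (glueCliques A B).Adj u v ↔ u ≠ v ∧ (u ∈ A ∧ v ∈ A ∨ u ∈ B ∧ v ∈ B) :=
  Iff.rfl

theorem neighborSet_glueCliques_of_mem_of_notMem {u : V} (huA : u ∈ A) (huB : u ∉ B) :
    (glueCliques A B).neighborSet u = A \ {u} := by
  ext w
  simp only [mem_neighborSet, glueCliques_adj, mem_sdiff, mem_singleton_iff]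
  constructor
  · rintro ⟨hne, ⟨-, hw⟩ | ⟨hu, -⟩⟩
    · exact ⟨hw, Ne.symm hne⟩
    · exact absurd hu huB
  · rintro ⟨hw, hne⟩
    exact ⟨Ne.symm hne, Or.inl ⟨huA, hw⟩⟩

theorem ncard_neighborSet_glueCliques_add_one [Finite V] {u : V} (huA : u ∈ A) (huB : u ∉ B) :
    ((glueCliques A B).neighborSet u).ncard + 1 = A.ncard := by
  rw [neighborSet_glueCliques_of_mem_of_notMem huA huB, ncard_sdiff_singleton_add_one huA]

theorem glueCliques_comm : glueCliques A B = glueCliques B A := by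
  ext u v
  simp only [glueCliques_adj, or_comm]

theorem mem_sdiff_of_not_adj_glueCliques (hAB : A ∪ B = univ) {u v : V} (huv : u ≠ v)
    (hnadj : ¬ (glueCliques A B).Adj u v) : u ∈ A \ B ∧ v ∈ B \ A ∨ u ∈ B \ A ∧ v ∈ A \ B := by
  have hu : u ∈ A ∪ B := hAB ▸ mem_univ u
  have hv : v ∈ A ∪ B := hAB ▸ mem_univ v
  simp only [glueCliques_adj, mem_sdiff, mem_union] at hu hv hnadj ⊢
  tauto

theorem ncard_neighborSet_add_ncard_neighborSet_glueCliques_of_mem_sdiff [Finite V]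
    (hAB : A ∪ B = univ) {u v : V} (hu : u ∈ A \ B) (hv : v ∈ B \ A) :
    ((glueCliques A B).neighborSet u).ncard + ((glueCliques A B).neighborSet v).ncard + 2 =
      Nat.card V + (A ∩ B).ncard := by
  have hdegu := ncard_neighborSet_glueCliques_add_one hu.1 hu.2
  have hdegv := ncard_neighborSet_glueCliques_add_one hv.1 hv.2
  rw [← glueCliques_comm] at hdegv
  have hcard := ncard_union_add_ncard_inter A B
  rw [hAB, ncard_univ] at hcard
  omega

theorem ncard_neighborSet_add_ncard_neighborSet_glueCliques [Finite V] (hAB : A ∪ B = univ)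
    {u v : V} (huv : u ≠ v) (hnadj : ¬ (glueCliques A B).Adj u v) :
    ((glueCliques A B).neighborSet u).ncard + ((glueCliques A B).neighborSet v).ncard + 2 =
      Nat.card V + (A ∩ B).ncard := by
  rcases mem_sdiff_of_not_adj_glueCliques hAB huv hnadj with ⟨hu, hv⟩ | ⟨hu, hv⟩
  · exact ncard_neighborSet_add_ncard_neighborSet_glueCliques_of_mem_sdiff hAB hu hv
  · rw [add_comm (ncard _)]
    exact ncard_neighborSet_add_ncard_neighborSet_glueCliques_of_mem_sdiff hAB hv hu

theorem not_connected_induce_compl_inter_glueCliques {a b : V} (haA : a ∈ A) (haB : a ∉ B)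
    (hbA : b ∉ A) : ¬ ((glueCliques A B).induce (A ∩ B)ᶜ).Connected := by
  intro hconn
  obtain ⟨p⟩ := hconn.preconnected ⟨a, fun h => haB h.2⟩ ⟨b, fun h => hbA h.1⟩
  obtain ⟨d, -, hdA, hdA'⟩ := p.exists_boundary_dart {w | w.1 ∈ A} haA hbA
  have hadj : (glueCliques A B).Adj d.fst d.snd := d.adj
  obtain ⟨-, hboth | hboth⟩ := hadj
  · exact hdA' hboth.2
  · exact d.fst.2 ⟨hdA, hboth.1⟩

end SimpleGraph

open SimpleGraph

/-- For every `r ≥ 0` and `n ≥ 2r + 4` there is a graph on `n`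
vertices which satisfies `deg u + deg v ≥ n + r - 1` for every non-adjacent pair,
but is not `(r+2)`-connected (i.e. it is not the case that `n ≥ r + 3` and the
removal of any set of fewer than `r + 2` vertices leaves the graph connected). -/
theorem stmt_12 (r n : ℕ) (hn : 2 * r + 4 ≤ n) :
    ∃ G : SimpleGraph (Fin n),
      (∀ u v : Fin n, u ≠ v → ¬ G.Adj u v →
        n + r - 1 ≤ (G.neighborSet u).ncard + (G.neighborSet v).ncard) ∧
      ¬ (r + 3 ≤ n ∧ ∀ S : Finset (Fin n), S.card < r + 2 →
          (G.induce ((↑S : Set (Fin n))ᶜ)).Connected) := by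
  -- glue `K_{r+2}` on `{0, …, r+1}` and `K_{n-1}` on the vertices other than `x = r+1`
  let x : Fin n := ⟨r + 1, by omega⟩
  let y : Fin n := ⟨r + 2, by omega⟩
  have hinter : Iic x ∩ {x}ᶜ = (Finset.Iio x : Set (Fin n)) := by
    rw [Finset.coe_Iio, ← Iic_sdiff_right, sdiff_eq]
  have hcover : Iic x ∪ {x}ᶜ = univ :=
    eq_univ_of_forall fun w => (eq_or_ne w x).imp (fun (h : w = x) => h ▸ self_mem_Iic) id
  refine ⟨glueCliques (Iic x) {x}ᶜ, fun u v huv hnadj => ?_, fun ⟨_, hconn⟩ => ?_⟩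
  · have hsum := ncard_neighborSet_add_ncard_neighborSet_glueCliques hcover huv hnadj
    rw [hinter, ncard_coe_finset, Fin.card_Iio, Nat.card_eq_fintype_card, Fintype.card_fin] at hsum
    change _ = n + (r + 1) at hsum
    omega
  · have hsep := hconn (Finset.Iio x) (by rw [Fin.card_Iio]; exact Nat.lt_succ_self _)
    rw [← hinter] at hsep
    have hy : y ∉ Iic x := by simp [x, y, Fin.le_def]
    exact not_connected_induce_compl_inter_glueCliques self_mem_Iic (not_not.mpr rfl) hy hsep
end

section
/- Let G be a simple graph on n vertices with minimum degree δ(G) = 4 and 8 ≤ n ≤ 10, satisfying deg(u) + deg(v) ≥ n + 1 for all non-adjacent pairs u, v. Let w be a vertex of degree 4, K = N(w), and T = V − K − {w}. Then 3 ≤ |T| ≤ 5, every vertex t ∈ T has deg(t) ≥ |T| + 2, and for every pair of non-adjacent vertices u, v ∈ T, the vertex u is adjacent to all vertices of G except w and v. -/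
/-!
A vertex `t ∈ T` is not adjacent to `w`, so Ore's condition with `deg w = 4` gives
`deg t ≥ n - 3 = |T| + 2`. If moreover `u ∈ T` missed some `x ∉ {u, v, w}` besides a non-neighbour
`v ∈ T`, then `u` would have the four non-neighbours `u, v, w, x`, forcing `deg u ≤ n - 4`.
-/

namespace SimpleGraph

variable {V : Type*} [Fintype V] [DecidableEq V] (G : SimpleGraph V) [DecidableRel G.Adj]

theorem card_compl_neighborFinset_erase (w : V) :
    ((Finset.univ \ G.neighborFinset w).erase w).card = Fintype.card V - G.degree w - 1 := by
  rw [Finset.card_erase_of_mem (by simp), Finset.card_univ_sdiff,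
    card_neighborFinset_eq_degree]

theorem degree_add_card_le_of_forall_not_adj {u : V} {S : Finset V}
    (hS : ∀ y ∈ S, ¬ G.Adj u y) : G.degree u + S.card ≤ Fintype.card V := by
  have hdisj : Disjoint (G.neighborFinset u) S :=
    Finset.disjoint_left.mpr fun y hy hyS => hS y hyS ((G.mem_neighborFinset u y).mp hy)
  rw [← card_neighborFinset_eq_degree, ← Finset.card_union_of_disjoint hdisj]
  exact Finset.card_le_univ _

end SimpleGraph

open SimpleGraph in
theorem stmt_18_general {V : Type*} [Fintype V] [DecidableEq V]
    (G : SimpleGraph V) [DecidableRel G.Adj] (n : ℕ)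
    (hn : Fintype.card V = n) (h8 : 8 ≤ n) (h10 : n ≤ 10)
    (hdeg : ∀ u v : V, u ≠ v → ¬ G.Adj u v →
      n + 1 ≤ G.degree u + G.degree v)
    (w : V) (hw : G.degree w = 4)
    (T : Finset V) (hT : T = (Finset.univ \ G.neighborFinset w).erase w) :
    (3 ≤ T.card ∧ T.card ≤ 5) ∧
      (∀ t ∈ T, T.card + 2 ≤ G.degree t) ∧
      (∀ u ∈ T, ∀ v ∈ T, u ≠ v → ¬ G.Adj u v →
        ∀ x : V, x ≠ w → x ≠ v → x ≠ u → G.Adj u x) := by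
  have hTcard : T.card = n - 5 := by
    rw [hT, card_compl_neighborFinset_erase, hw, hn]
    omega
  have hmemT : ∀ t ∈ T, t ≠ w ∧ ¬ G.Adj t w := fun t ht => by
    simp only [hT, Finset.mem_erase, Finset.mem_sdiff, Finset.mem_univ, true_and,
      mem_neighborFinset] at ht
    exact ⟨ht.1, fun h => ht.2 h.symm⟩
  have hdegT : ∀ t ∈ T, n - 3 ≤ G.degree t := fun t ht => by
    have := hdeg t w (hmemT t ht).1 (hmemT t ht).2
    omega
  refine ⟨⟨by omega, by omega⟩, fun t ht => by have := hdegT t ht; omega, ?_⟩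
  intro u hu v hv huv huv_adj x hxw hxv hxu
  by_contra hux
  have hnonadj : ∀ y ∈ ({u, w, v, x} : Finset V), ¬ G.Adj u y := by
    simp only [Finset.mem_insert, Finset.mem_singleton]
    rintro y (rfl | rfl | rfl | rfl)
    exacts [G.irrefl, (hmemT u hu).2, huv_adj, hux]
  have hcard : ({u, w, v, x} : Finset V).card = 4 := by
    rw [Finset.card_eq_four]
    exact ⟨u, w, v, x, (hmemT u hu).1, huv, hxu.symm, ((hmemT v hv).1).symm, hxw.symm,
      hxv.symm, rfl⟩
  have hupper := G.degree_add_card_le_of_forall_not_adj hnonadj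
  have hlower := hdegT u hu
  omega

/-- Let `δ(G) = 4`, `8 ≤ n ≤ 10`, and `deg u + deg v ≥ n + 1` for
all non-adjacent pairs. If `deg w = 4`, `K = N(w)` and `T = V - K - {w}`, then
`3 ≤ |T| ≤ 5`, every `t ∈ T` has `deg t ≥ |T| + 2`, and for non-adjacent
`u, v ∈ T`, `u` is adjacent to every vertex except `w` and `v` (and itself). -/
theorem stmt_18 {V : Type*} [Fintype V] [DecidableEq V] [Nonempty V]
    (G : SimpleGraph V) [DecidableRel G.Adj] (n : ℕ)
    (hn : Fintype.card V = n) (h8 : 8 ≤ n) (h10 : n ≤ 10)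
    (hmin : G.minDegree = 4)
    (hdeg : ∀ u v : V, u ≠ v → ¬ G.Adj u v →
      n + 1 ≤ G.degree u + G.degree v)
    (w : V) (hw : G.degree w = 4)
    (T : Finset V) (hT : T = (Finset.univ \ G.neighborFinset w).erase w) :
    (3 ≤ T.card ∧ T.card ≤ 5) ∧
      (∀ t ∈ T, T.card + 2 ≤ G.degree t) ∧
      (∀ u ∈ T, ∀ v ∈ T, u ≠ v → ¬ G.Adj u v →
        ∀ x : V, x ≠ w → x ≠ v → x ≠ u → G.Adj u x) :=
  stmt_18_general G n hn h8 h10 hdeg w hw T hT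
end
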